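/- For every n, Δ*₍ₙ₊₁₎(Θ) = Σ*₍ₙ₊₁₎(Θ) ∩ Π*₍ₙ₊₁₎(Θ). -/
import Mathlib


/-- First-order formulas over a signature `Θ`, abstracting atomic formulas (which
include `⊤` and `⊥`) as elements of a type `α`.  Quantifiers carry the name of the
bound variable (a natural number). -/
inductive Fml (α : Type) : Type
  | atom : α → Fml α
  | neg : Fml α → Fml α
  | and : Fml α → Fml α → Fml α
  | or : Fml α → Fml α → Fml α
  | imp : Fml α → Fml α → Fml α
  | ex : ℕ → Fml α → Fml α
  | all : ℕ → Fml α → Fml α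

/-- `SP α true n A` means `A ∈ Σ*ₙ(Θ)`, and `SP α false n A` means `A ∈ Π*ₙ(Θ)`.
There are no constructors with index `0`, so `Σ*₀ = Π*₀ = ∅`; at index `n+1` the
classes `Σ*₍ₙ₊₁₎` and `Π*₍ₙ₊₁₎` are the least classes closed under the clauses of
the simultaneous recursion. -/
inductive SP (α : Type) : Bool → ℕ → Fml α → Prop
  | atom {b : Bool} {n : ℕ} (a : α) : SP α b (n + 1) (Fml.atom a)
  | neg {b : Bool} {n : ℕ} {A : Fml α} :
      SP α (!b) (n + 1) A → SP α b (n + 1) (Fml.neg A)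
  | and {b : Bool} {n : ℕ} {A B : Fml α} :
      SP α b (n + 1) A → SP α b (n + 1) B → SP α b (n + 1) (Fml.and A B)
  | or {b : Bool} {n : ℕ} {A B : Fml α} :
      SP α b (n + 1) A → SP α b (n + 1) B → SP α b (n + 1) (Fml.or A B)
  | imp {b : Bool} {n : ℕ} {A B : Fml α} :
      SP α (!b) (n + 1) A → SP α b (n + 1) B → SP α b (n + 1) (Fml.imp A B)
  | exS {n : ℕ} {v : ℕ} {A : Fml α} :
      SP α true (n + 1) A → SP α true (n + 1) (Fml.ex v A)
  | allS {n : ℕ} {v : ℕ} {A : Fml α} :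
      SP α false n A → SP α true (n + 1) (Fml.all v A)
  | allP {n : ℕ} {v : ℕ} {A : Fml α} :
      SP α false (n + 1) A → SP α false (n + 1) (Fml.all v A)
  | exP {n : ℕ} {v : ℕ} {A : Fml α} :
      SP α true n A → SP α false (n + 1) (Fml.ex v A)

/-- The class `Σ*ₙ(Θ)`. -/
def SigmaStar (α : Type) (n : ℕ) : Set (Fml α) := {A | SP α true n A}

/-- The class `Π*ₙ(Θ)`. -/
def PiStar (α : Type) (n : ℕ) : Set (Fml α) := {A | SP α false n A}

/-- `DStar α (n+1) A` means `A ∈ Δ*₍ₙ₊₁₎(Θ)`: the least class containing the atomic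
formulas, closed under `¬`, `∧`, `∨`, `→`, and containing `∃v B` for `B ∈ Σ*ₙ` and
`∀v B` for `B ∈ Π*ₙ`.  (There are no constructors with index `0`.) -/
inductive DStar (α : Type) : ℕ → Fml α → Prop
  | atom {n : ℕ} (a : α) : DStar α (n + 1) (Fml.atom a)
  | neg {n : ℕ} {A : Fml α} : DStar α (n + 1) A → DStar α (n + 1) (Fml.neg A)
  | and {n : ℕ} {A B : Fml α} :
      DStar α (n + 1) A → DStar α (n + 1) B → DStar α (n + 1) (Fml.and A B)
  | or {n : ℕ} {A B : Fml α} :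
      DStar α (n + 1) A → DStar α (n + 1) B → DStar α (n + 1) (Fml.or A B)
  | imp {n : ℕ} {A B : Fml α} :
      DStar α (n + 1) A → DStar α (n + 1) B → DStar α (n + 1) (Fml.imp A B)
  | ex {n : ℕ} {v : ℕ} {A : Fml α} :
      SP α true n A → DStar α (n + 1) (Fml.ex v A)
  | all {n : ℕ} {v : ℕ} {A : Fml α} :
      SP α false n A → DStar α (n + 1) (Fml.all v A)

/-- The class `Δ*ₙ(Θ)`. -/
def DeltaStar (α : Type) (n : ℕ) : Set (Fml α) := {A | DStar α n A}

lemma SP.mono {α : Type} {b : Bool} {n : ℕ} {A : Fml α} (h : SP α b n A) :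
    SP α b (n + 1) A := by
  induction h with
  | atom a => exact SP.atom a
  | neg _ ih => exact SP.neg ih
  | and _ _ ih1 ih2 => exact SP.and ih1 ih2
  | or _ _ ih1 ih2 => exact SP.or ih1 ih2
  | imp _ _ ih1 ih2 => exact SP.imp ih1 ih2
  | exS _ ih => exact SP.exS ih
  | allS _ ih => exact SP.allS ih
  | allP _ ih => exact SP.allP ih
  | exP _ ih => exact SP.exP ih

lemma sp_of_dstar {α : Type} {m : ℕ} {A : Fml α} (h : DStar α m A) :
    ∀ b, SP α b m A := by
  induction h with
  | atom a => exact fun b => SP.atom a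
  | neg _ ih => exact fun b => SP.neg (ih (!b))
  | and _ _ ih1 ih2 => exact fun b => SP.and (ih1 b) (ih2 b)
  | or _ _ ih1 ih2 => exact fun b => SP.or (ih1 b) (ih2 b)
  | imp _ _ ih1 ih2 => exact fun b => SP.imp (ih1 (!b)) (ih2 b)
  | ex h => exact fun b => by cases b with
      | true => exact SP.exS h.mono
      | false => exact SP.exP h
  | all h => exact fun b => by cases b with
      | true => exact SP.allS h
      | false => exact SP.allP h.mono

lemma dstar_of_sp {α : Type} {n : ℕ} (A : Fml α)
    (hs : SP α true (n + 1) A) (hp : SP α false (n + 1) A) :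
    DStar α (n + 1) A := by
  induction A with
  | atom a => exact DStar.atom a
  | neg A ih =>
    cases hs with | neg hs' =>
    cases hp with | neg hp' =>
    exact DStar.neg (ih hp' hs')
  | and A B ihA ihB =>
    cases hs with | and hsA hsB =>
    cases hp with | and hpA hpB =>
    exact DStar.and (ihA hsA hpA) (ihB hsB hpB)
  | or A B ihA ihB =>
    cases hs with | or hsA hsB =>
    cases hp with | or hpA hpB =>
    exact DStar.or (ihA hsA hpA) (ihB hsB hpB)
  | imp A B ihA ihB =>
    cases hs with | imp hsA hsB =>
    cases hp with | imp hpA hpB =>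
    exact DStar.imp (ihA hpA hsA) (ihB hsB hpB)
  | ex v A ih =>
    cases hp with | exP h => exact DStar.ex h
  | all v A ih =>
    cases hs with | allS h => exact DStar.all h

/-- For every `n`, `Δ*₍ₙ₊₁₎(Θ) = Σ*₍ₙ₊₁₎(Θ) ∩ Π*₍ₙ₊₁₎(Θ)`. -/
theorem deltaStar_eq_sigmaStar_inter_piStar {α : Type} (n : ℕ) :
    DeltaStar α (n + 1) = SigmaStar α (n + 1) ∩ PiStar α (n + 1) := by
  ext A
  constructor
  · intro h
    exact ⟨sp_of_dstar h true, sp_of_dstar h false⟩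
  · rintro ⟨hs, hp⟩
    exact dstar_of_sp A hs hp
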